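/- Define the 12×12 matrix u over T = k[x,y,z] with rows (x, 0, z³, y², 0, yz², 0, 0, 0, 0, 0, −z³), (0, x, −y, z², z, 0, 0, 0, 0, 0, 0, y), (z², −y², −x, 0, 0, 0, 0, yz, y, z³, 0, 0), (y, z³, 0, −x, 0, 0, z², 0, 0, 0, 0, 0), (0, 0, 0, 0, −x, 0, −z³, y², 0, 0, 0, 0), (0, 0, 0, 0, 0, −x, −y, −z², 0, 0, 0, 0), (0, 0, 0, 0, −z², −y², x, 0, 0, 0, 0, 0), (0, 0, 0, 0, y, −z³, 0, x, 0, 0, 0, 0), (0, 0, 0, 0, 0, 0, 0, 0, x, 0, z³, y²), (0, 0, 0, 0, 0, 0, 0, 0, 0, x, −y, z²), (0, 0, 0, 0, 0, 0, 0, 0, z², −y², −x, 0), (0, 0, 0, 0, 0, 0, 0, 0, y, z³, 0, −x). Then u·u = (x² + y³ + z⁵)·I₁₂, i.e., (u,u) is a symmetric matrix factorization of x² + y³ + z⁵ (an alternative factorization representing the rank-six bundle E₆, with a different number of zero entries than the one coming from the sequence with G₃). -/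
import Mathlib


open MvPolynomial

section VecAux
variable {R : Type*}
@[simp] lemma consAux_mk0 {m : ℕ} (x : R) (u : Fin m → R) (h : 0 < m+1) :
    Matrix.vecCons x u ⟨0, h⟩ = x := rfl
@[simp] lemma consAux_mk1 {m : ℕ} (x : R) (u : Fin (m+1) → R) (h : 1 < m+2) :
    Matrix.vecCons x u ⟨1, h⟩ = u ⟨0, by omega⟩ := rfl
@[simp] lemma consAux_mk2 {m : ℕ} (x : R) (u : Fin (m+2) → R) (h : 2 < m+3) :
    Matrix.vecCons x u ⟨2, h⟩ = u ⟨1, by omega⟩ := rfl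
@[simp] lemma consAux_mk3 {m : ℕ} (x : R) (u : Fin (m+3) → R) (h : 3 < m+4) :
    Matrix.vecCons x u ⟨3, h⟩ = u ⟨2, by omega⟩ := rfl
@[simp] lemma consAux_mk4 {m : ℕ} (x : R) (u : Fin (m+4) → R) (h : 4 < m+5) :
    Matrix.vecCons x u ⟨4, h⟩ = u ⟨3, by omega⟩ := rfl
@[simp] lemma consAux_mk5 {m : ℕ} (x : R) (u : Fin (m+5) → R) (h : 5 < m+6) :
    Matrix.vecCons x u ⟨5, h⟩ = u ⟨4, by omega⟩ := rfl
@[simp] lemma consAux_mk6 {m : ℕ} (x : R) (u : Fin (m+6) → R) (h : 6 < m+7) :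
    Matrix.vecCons x u ⟨6, h⟩ = u ⟨5, by omega⟩ := rfl
@[simp] lemma consAux_mk7 {m : ℕ} (x : R) (u : Fin (m+7) → R) (h : 7 < m+8) :
    Matrix.vecCons x u ⟨7, h⟩ = u ⟨6, by omega⟩ := rfl
@[simp] lemma consAux_mk8 {m : ℕ} (x : R) (u : Fin (m+8) → R) (h : 8 < m+9) :
    Matrix.vecCons x u ⟨8, h⟩ = u ⟨7, by omega⟩ := rfl
@[simp] lemma consAux_mk9 {m : ℕ} (x : R) (u : Fin (m+9) → R) (h : 9 < m+10) :
    Matrix.vecCons x u ⟨9, h⟩ = u ⟨8, by omega⟩ := rfl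
@[simp] lemma consAux_mk10 {m : ℕ} (x : R) (u : Fin (m+10) → R) (h : 10 < m+11) :
    Matrix.vecCons x u ⟨10, h⟩ = u ⟨9, by omega⟩ := rfl
@[simp] lemma consAux_mk11 {m : ℕ} (x : R) (u : Fin (m+11) → R) (h : 11 < m+12) :
    Matrix.vecCons x u ⟨11, h⟩ = u ⟨10, by omega⟩ := rfl
variable (a0 a1 a2 a3 a4 a5 a6 a7 a8 a9 a10 a11 : R)
@[simp] lemma vec12lit_0 : ![a0, a1, a2, a3, a4, a5, a6, a7, a8, a9, a10, a11] (0 : Fin 12) = a0 := rfl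
@[simp] lemma vec12lit_1 : ![a0, a1, a2, a3, a4, a5, a6, a7, a8, a9, a10, a11] (1 : Fin 12) = a1 := rfl
@[simp] lemma vec12lit_2 : ![a0, a1, a2, a3, a4, a5, a6, a7, a8, a9, a10, a11] (2 : Fin 12) = a2 := rfl
@[simp] lemma vec12lit_3 : ![a0, a1, a2, a3, a4, a5, a6, a7, a8, a9, a10, a11] (3 : Fin 12) = a3 := rfl
@[simp] lemma vec12lit_4 : ![a0, a1, a2, a3, a4, a5, a6, a7, a8, a9, a10, a11] (4 : Fin 12) = a4 := rfl
@[simp] lemma vec12lit_5 : ![a0, a1, a2, a3, a4, a5, a6, a7, a8, a9, a10, a11] (5 : Fin 12) = a5 := rfl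
@[simp] lemma vec12lit_6 : ![a0, a1, a2, a3, a4, a5, a6, a7, a8, a9, a10, a11] (6 : Fin 12) = a6 := rfl
@[simp] lemma vec12lit_7 : ![a0, a1, a2, a3, a4, a5, a6, a7, a8, a9, a10, a11] (7 : Fin 12) = a7 := rfl
@[simp] lemma vec12lit_8 : ![a0, a1, a2, a3, a4, a5, a6, a7, a8, a9, a10, a11] (8 : Fin 12) = a8 := rfl
@[simp] lemma vec12lit_9 : ![a0, a1, a2, a3, a4, a5, a6, a7, a8, a9, a10, a11] (9 : Fin 12) = a9 := rfl
@[simp] lemma vec12lit_10 : ![a0, a1, a2, a3, a4, a5, a6, a7, a8, a9, a10, a11] (10 : Fin 12) = a10 := rfl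
@[simp] lemma vec12lit_11 : ![a0, a1, a2, a3, a4, a5, a6, a7, a8, a9, a10, a11] (11 : Fin 12) = a11 := rfl
@[simp] lemma consF2_1 (x : R) (u : Fin 1 → R) : Matrix.vecCons x u (1 : Fin 2) = u (0 : Fin 1) := rfl
@[simp] lemma consF3_1 (x : R) (u : Fin 2 → R) : Matrix.vecCons x u (1 : Fin 3) = u (0 : Fin 2) := rfl
@[simp] lemma consF3_2 (x : R) (u : Fin 2 → R) : Matrix.vecCons x u (2 : Fin 3) = u (1 : Fin 2) := rfl
@[simp] lemma consF4_1 (x : R) (u : Fin 3 → R) : Matrix.vecCons x u (1 : Fin 4) = u (0 : Fin 3) := rfl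
@[simp] lemma consF4_2 (x : R) (u : Fin 3 → R) : Matrix.vecCons x u (2 : Fin 4) = u (1 : Fin 3) := rfl
@[simp] lemma consF4_3 (x : R) (u : Fin 3 → R) : Matrix.vecCons x u (3 : Fin 4) = u (2 : Fin 3) := rfl
@[simp] lemma consF5_1 (x : R) (u : Fin 4 → R) : Matrix.vecCons x u (1 : Fin 5) = u (0 : Fin 4) := rfl
@[simp] lemma consF5_2 (x : R) (u : Fin 4 → R) : Matrix.vecCons x u (2 : Fin 5) = u (1 : Fin 4) := rfl
@[simp] lemma consF5_3 (x : R) (u : Fin 4 → R) : Matrix.vecCons x u (3 : Fin 5) = u (2 : Fin 4) := rfl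
@[simp] lemma consF5_4 (x : R) (u : Fin 4 → R) : Matrix.vecCons x u (4 : Fin 5) = u (3 : Fin 4) := rfl
@[simp] lemma consF6_1 (x : R) (u : Fin 5 → R) : Matrix.vecCons x u (1 : Fin 6) = u (0 : Fin 5) := rfl
@[simp] lemma consF6_2 (x : R) (u : Fin 5 → R) : Matrix.vecCons x u (2 : Fin 6) = u (1 : Fin 5) := rfl
@[simp] lemma consF6_3 (x : R) (u : Fin 5 → R) : Matrix.vecCons x u (3 : Fin 6) = u (2 : Fin 5) := rfl
@[simp] lemma consF6_4 (x : R) (u : Fin 5 → R) : Matrix.vecCons x u (4 : Fin 6) = u (3 : Fin 5) := rfl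
@[simp] lemma consF6_5 (x : R) (u : Fin 5 → R) : Matrix.vecCons x u (5 : Fin 6) = u (4 : Fin 5) := rfl
@[simp] lemma consF7_1 (x : R) (u : Fin 6 → R) : Matrix.vecCons x u (1 : Fin 7) = u (0 : Fin 6) := rfl
@[simp] lemma consF7_2 (x : R) (u : Fin 6 → R) : Matrix.vecCons x u (2 : Fin 7) = u (1 : Fin 6) := rfl
@[simp] lemma consF7_3 (x : R) (u : Fin 6 → R) : Matrix.vecCons x u (3 : Fin 7) = u (2 : Fin 6) := rfl
@[simp] lemma consF7_4 (x : R) (u : Fin 6 → R) : Matrix.vecCons x u (4 : Fin 7) = u (3 : Fin 6) := rfl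
@[simp] lemma consF7_5 (x : R) (u : Fin 6 → R) : Matrix.vecCons x u (5 : Fin 7) = u (4 : Fin 6) := rfl
@[simp] lemma consF7_6 (x : R) (u : Fin 6 → R) : Matrix.vecCons x u (6 : Fin 7) = u (5 : Fin 6) := rfl
@[simp] lemma consF8_1 (x : R) (u : Fin 7 → R) : Matrix.vecCons x u (1 : Fin 8) = u (0 : Fin 7) := rfl
@[simp] lemma consF8_2 (x : R) (u : Fin 7 → R) : Matrix.vecCons x u (2 : Fin 8) = u (1 : Fin 7) := rfl
@[simp] lemma consF8_3 (x : R) (u : Fin 7 → R) : Matrix.vecCons x u (3 : Fin 8) = u (2 : Fin 7) := rfl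
@[simp] lemma consF8_4 (x : R) (u : Fin 7 → R) : Matrix.vecCons x u (4 : Fin 8) = u (3 : Fin 7) := rfl
@[simp] lemma consF8_5 (x : R) (u : Fin 7 → R) : Matrix.vecCons x u (5 : Fin 8) = u (4 : Fin 7) := rfl
@[simp] lemma consF8_6 (x : R) (u : Fin 7 → R) : Matrix.vecCons x u (6 : Fin 8) = u (5 : Fin 7) := rfl
@[simp] lemma consF8_7 (x : R) (u : Fin 7 → R) : Matrix.vecCons x u (7 : Fin 8) = u (6 : Fin 7) := rfl
@[simp] lemma consF9_1 (x : R) (u : Fin 8 → R) : Matrix.vecCons x u (1 : Fin 9) = u (0 : Fin 8) := rfl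
@[simp] lemma consF9_2 (x : R) (u : Fin 8 → R) : Matrix.vecCons x u (2 : Fin 9) = u (1 : Fin 8) := rfl
@[simp] lemma consF9_3 (x : R) (u : Fin 8 → R) : Matrix.vecCons x u (3 : Fin 9) = u (2 : Fin 8) := rfl
@[simp] lemma consF9_4 (x : R) (u : Fin 8 → R) : Matrix.vecCons x u (4 : Fin 9) = u (3 : Fin 8) := rfl
@[simp] lemma consF9_5 (x : R) (u : Fin 8 → R) : Matrix.vecCons x u (5 : Fin 9) = u (4 : Fin 8) := rfl
@[simp] lemma consF9_6 (x : R) (u : Fin 8 → R) : Matrix.vecCons x u (6 : Fin 9) = u (5 : Fin 8) := rfl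
@[simp] lemma consF9_7 (x : R) (u : Fin 8 → R) : Matrix.vecCons x u (7 : Fin 9) = u (6 : Fin 8) := rfl
@[simp] lemma consF9_8 (x : R) (u : Fin 8 → R) : Matrix.vecCons x u (8 : Fin 9) = u (7 : Fin 8) := rfl
@[simp] lemma consF10_1 (x : R) (u : Fin 9 → R) : Matrix.vecCons x u (1 : Fin 10) = u (0 : Fin 9) := rfl
@[simp] lemma consF10_2 (x : R) (u : Fin 9 → R) : Matrix.vecCons x u (2 : Fin 10) = u (1 : Fin 9) := rfl
@[simp] lemma consF10_3 (x : R) (u : Fin 9 → R) : Matrix.vecCons x u (3 : Fin 10) = u (2 : Fin 9) := rfl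
@[simp] lemma consF10_4 (x : R) (u : Fin 9 → R) : Matrix.vecCons x u (4 : Fin 10) = u (3 : Fin 9) := rfl
@[simp] lemma consF10_5 (x : R) (u : Fin 9 → R) : Matrix.vecCons x u (5 : Fin 10) = u (4 : Fin 9) := rfl
@[simp] lemma consF10_6 (x : R) (u : Fin 9 → R) : Matrix.vecCons x u (6 : Fin 10) = u (5 : Fin 9) := rfl
@[simp] lemma consF10_7 (x : R) (u : Fin 9 → R) : Matrix.vecCons x u (7 : Fin 10) = u (6 : Fin 9) := rfl
@[simp] lemma consF10_8 (x : R) (u : Fin 9 → R) : Matrix.vecCons x u (8 : Fin 10) = u (7 : Fin 9) := rfl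
@[simp] lemma consF10_9 (x : R) (u : Fin 9 → R) : Matrix.vecCons x u (9 : Fin 10) = u (8 : Fin 9) := rfl
@[simp] lemma consF11_1 (x : R) (u : Fin 10 → R) : Matrix.vecCons x u (1 : Fin 11) = u (0 : Fin 10) := rfl
@[simp] lemma consF11_2 (x : R) (u : Fin 10 → R) : Matrix.vecCons x u (2 : Fin 11) = u (1 : Fin 10) := rfl
@[simp] lemma consF11_3 (x : R) (u : Fin 10 → R) : Matrix.vecCons x u (3 : Fin 11) = u (2 : Fin 10) := rfl
@[simp] lemma consF11_4 (x : R) (u : Fin 10 → R) : Matrix.vecCons x u (4 : Fin 11) = u (3 : Fin 10) := rfl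
@[simp] lemma consF11_5 (x : R) (u : Fin 10 → R) : Matrix.vecCons x u (5 : Fin 11) = u (4 : Fin 10) := rfl
@[simp] lemma consF11_6 (x : R) (u : Fin 10 → R) : Matrix.vecCons x u (6 : Fin 11) = u (5 : Fin 10) := rfl
@[simp] lemma consF11_7 (x : R) (u : Fin 10 → R) : Matrix.vecCons x u (7 : Fin 11) = u (6 : Fin 10) := rfl
@[simp] lemma consF11_8 (x : R) (u : Fin 10 → R) : Matrix.vecCons x u (8 : Fin 11) = u (7 : Fin 10) := rfl
@[simp] lemma consF11_9 (x : R) (u : Fin 10 → R) : Matrix.vecCons x u (9 : Fin 11) = u (8 : Fin 10) := rfl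
@[simp] lemma consF11_10 (x : R) (u : Fin 10 → R) : Matrix.vecCons x u (10 : Fin 11) = u (9 : Fin 10) := rfl
@[simp] lemma consF12_1 (x : R) (u : Fin 11 → R) : Matrix.vecCons x u (1 : Fin 12) = u (0 : Fin 11) := rfl
@[simp] lemma consF12_2 (x : R) (u : Fin 11 → R) : Matrix.vecCons x u (2 : Fin 12) = u (1 : Fin 11) := rfl
@[simp] lemma consF12_3 (x : R) (u : Fin 11 → R) : Matrix.vecCons x u (3 : Fin 12) = u (2 : Fin 11) := rfl
@[simp] lemma consF12_4 (x : R) (u : Fin 11 → R) : Matrix.vecCons x u (4 : Fin 12) = u (3 : Fin 11) := rfl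
@[simp] lemma consF12_5 (x : R) (u : Fin 11 → R) : Matrix.vecCons x u (5 : Fin 12) = u (4 : Fin 11) := rfl
@[simp] lemma consF12_6 (x : R) (u : Fin 11 → R) : Matrix.vecCons x u (6 : Fin 12) = u (5 : Fin 11) := rfl
@[simp] lemma consF12_7 (x : R) (u : Fin 11 → R) : Matrix.vecCons x u (7 : Fin 12) = u (6 : Fin 11) := rfl
@[simp] lemma consF12_8 (x : R) (u : Fin 11 → R) : Matrix.vecCons x u (8 : Fin 12) = u (7 : Fin 11) := rfl
@[simp] lemma consF12_9 (x : R) (u : Fin 11 → R) : Matrix.vecCons x u (9 : Fin 12) = u (8 : Fin 11) := rfl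
@[simp] lemma consF12_10 (x : R) (u : Fin 11 → R) : Matrix.vecCons x u (10 : Fin 12) = u (9 : Fin 11) := rfl
@[simp] lemma consF12_11 (x : R) (u : Fin 11 → R) : Matrix.vecCons x u (11 : Fin 12) = u (10 : Fin 11) := rfl
end VecAux

/-- Alternative symmetric matrix factorization of x^2+y^3+z^5 representing the rank-six bundle E_6 of weight type (2,3,5), obtained from 0 → τF_4 → E_6 → τ⁻F_2 → 0. -/
noncomputable def uE6alt_235 (k : Type*) [Field k] :
    Matrix (Fin 12) (Fin 12) (MvPolynomial (Fin 3) k) :=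
  let x : MvPolynomial (Fin 3) k := X 0
  let y : MvPolynomial (Fin 3) k := X 1
  let z : MvPolynomial (Fin 3) k := X 2
  !![x, 0, z ^ 3, y ^ 2, 0, y * z ^ 2, 0, 0, 0, 0, 0, -z ^ 3;
     0, x, -y, z ^ 2, z, 0, 0, 0, 0, 0, 0, y;
     z ^ 2, -y ^ 2, -x, 0, 0, 0, 0, y * z, y, z ^ 3, 0, 0;
     y, z ^ 3, 0, -x, 0, 0, z ^ 2, 0, 0, 0, 0, 0;
     0, 0, 0, 0, -x, 0, -z ^ 3, y ^ 2, 0, 0, 0, 0;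
     0, 0, 0, 0, 0, -x, -y, -z ^ 2, 0, 0, 0, 0;
     0, 0, 0, 0, -z ^ 2, -y ^ 2, x, 0, 0, 0, 0, 0;
     0, 0, 0, 0, y, -z ^ 3, 0, x, 0, 0, 0, 0;
     0, 0, 0, 0, 0, 0, 0, 0, x, 0, z ^ 3, y ^ 2;
     0, 0, 0, 0, 0, 0, 0, 0, 0, x, -y, z ^ 2;
     0, 0, 0, 0, 0, 0, 0, 0, z ^ 2, -y ^ 2, -x, 0;
     0, 0, 0, 0, 0, 0, 0, 0, y, z ^ 3, 0, -x]

set_option maxHeartbeats 2000000 in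
theorem stmt_12 (k : Type*) [Field k] :
    uE6alt_235 k * uE6alt_235 k =
      ((X 0 ^ 2 + X 1 ^ 3 + X 2 ^ 5 : MvPolynomial (Fin 3) k)) •
        (1 : Matrix (Fin 12) (Fin 12) (MvPolynomial (Fin 3) k)) := by
  refine Matrix.ext fun i j => ?_
  fin_cases i <;> fin_cases j <;>
    · simp [uE6alt_235, Matrix.mul_apply, Fin.sum_univ_succ, Matrix.one_apply]
      try ring
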